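/- arXiv:1504.06882 — 2 statements merged into one kernel-verified Lean document; each statement's English description precedes it below -/
import Mathlib

section
/- Let d ≥ 1, let p : (0,∞) → ℝ be twice continuously differentiable, and let ρ, r : ℝ^d → (0,∞) be differentiable functions. Then at every point of ℝ^d the following identity holds: ρ [p′(ρ)∇log ρ − p′(r)∇log r] · [∇log ρ − ∇log r] = ρ p′(ρ) |∇log ρ − ∇log r|² + ∇[p(ρ) − p(r) − p′(r)(ρ − r)] · ∇log r − [ρ(p′(ρ) − p′(r)) − p″(r)(ρ − r) r] |∇log r|², where ∇log ρ = ∇ρ/ρ, ∇log r = ∇r/r, and ∇[p(ρ) − p(r) − p′(r)(ρ − r)] denotes the gradient of the composite function x ↦ p(ρ(x)) − p(r(x)) − p′(r(x))(ρ(x) − r(x)). -/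
open Real MeasureTheory Set Filter

noncomputable section

variable {d : ℕ}

/-- `i`-th partial derivative of a scalar function on `ℝᵈ`. -/
def sder (i : Fin d) (f : (Fin d → ℝ) → ℝ) (x : Fin d → ℝ) : ℝ :=
  fderiv ℝ f x (Pi.single i 1)

/-- Jacobian matrix of a vector field on `ℝᵈ`: `(∇u)_{ij} = ∂_j u_i`. -/
def sjac (u : (Fin d → ℝ) → Fin d → ℝ) (x : Fin d → ℝ) : Fin d → Fin d → ℝ :=
  fun i j => sder j (fun y => u y i) x

/-- Symmetric gradient `D(u) = (∇u + (∇u)ᵀ)/2` of a vector field on `ℝᵈ`. -/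
def sD (u : (Fin d → ℝ) → Fin d → ℝ) (x : Fin d → ℝ) : Fin d → Fin d → ℝ :=
  fun i j => (sjac u x i j + sjac u x j i) / 2

/-- Antisymmetric gradient `A(u) = (∇u - (∇u)ᵀ)/2` of a vector field on `ℝᵈ`. -/
def sA (u : (Fin d → ℝ) → Fin d → ℝ) (x : Fin d → ℝ) : Fin d → Fin d → ℝ :=
  fun i j => (sjac u x i j - sjac u x j i) / 2

/-- Time derivative `∂ₜ f` of a scalar function on `ℝ × ℝᵈ`. -/
def tder (f : ℝ × (Fin d → ℝ) → ℝ) (z : ℝ × (Fin d → ℝ)) : ℝ :=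
  fderiv ℝ f z (1, 0)

/-- `i`-th spatial partial derivative `∂ᵢ f` of a scalar function on `ℝ × ℝᵈ`. -/
def xder (i : Fin d) (f : ℝ × (Fin d → ℝ) → ℝ) (z : ℝ × (Fin d → ℝ)) : ℝ :=
  fderiv ℝ f z (0, Pi.single i 1)

/-- Spatial divergence of a (time-dependent) vector field. -/
def xdiv (u : ℝ × (Fin d → ℝ) → Fin d → ℝ) (z : ℝ × (Fin d → ℝ)) : ℝ :=
  ∑ i, xder i (fun y => u y i) z

/-- Spatial Jacobian matrix `(∇u)_{ij} = ∂_j u_i` of a (time-dependent) vector field. -/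
def xjac (u : ℝ × (Fin d → ℝ) → Fin d → ℝ) (z : ℝ × (Fin d → ℝ)) : Fin d → Fin d → ℝ :=
  fun i j => xder j (fun y => u y i) z

/-- Symmetric gradient `D(u) = (∇u + (∇u)ᵀ)/2` of a (time-dependent) vector field. -/
def xD (u : ℝ × (Fin d → ℝ) → Fin d → ℝ) (z : ℝ × (Fin d → ℝ)) : Fin d → Fin d → ℝ :=
  fun i j => (xjac u z i j + xjac u z j i) / 2

/-- Antisymmetric gradient `A(u) = (∇u - (∇u)ᵀ)/2` of a (time-dependent) vector field. -/
def xA (u : ℝ × (Fin d → ℝ) → Fin d → ℝ) (z : ℝ × (Fin d → ℝ)) : Fin d → Fin d → ℝ :=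
  fun i j => (xjac u z i j - xjac u z j i) / 2

/-- Divergence of a matrix field: `(div M)ᵢ = ∑ⱼ ∂ⱼ M_{ij}`. -/
def mdiv (M : ℝ × (Fin d → ℝ) → Fin d → Fin d → ℝ) (z : ℝ × (Fin d → ℝ)) : Fin d → ℝ :=
  fun i => ∑ j, xder j (fun y => M y i j) z

/-- Euclidean inner product on `ℝᵈ`. -/
def dotv (a b : Fin d → ℝ) : ℝ := ∑ i, a i * b i

/-- Frobenius inner product of `d × d` matrices. -/
def frob (M N : Fin d → Fin d → ℝ) : ℝ := ∑ i, ∑ j, M i j * N i j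

/-- The unit box `[0,1]ᵈ`. -/
def box (d : ℕ) : Set (Fin d → ℝ) := Set.univ.pi fun _ => Set.Icc (0 : ℝ) 1

/-- `ℤᵈ`-periodicity in the space variable for scalar functions on `ℝ × ℝᵈ`. -/
def PeriodicX (f : ℝ × (Fin d → ℝ) → ℝ) : Prop :=
  ∀ (t : ℝ) (x : Fin d → ℝ) (k : Fin d → ℤ), f (t, x + fun i => (k i : ℝ)) = f (t, x)

/-- Mass conservation equation `∂ₜ ρ + div (ρ u) = 0` at the point `z`. -/
def MassEq (ρ : ℝ × (Fin d → ℝ) → ℝ) (u : ℝ × (Fin d → ℝ) → Fin d → ℝ)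
    (z : ℝ × (Fin d → ℝ)) : Prop :=
  tder ρ z + xdiv (fun y j => ρ y * u y j) z = 0

/-- Momentum equation `∂ₜ(ρu) + div(ρ u ⊗ u) + ∇(a ρ^γ) - 2 μ div(ρ D(u)) = 0`
at the point `z`. -/
def MomEq (μ a γ : ℝ) (ρ : ℝ × (Fin d → ℝ) → ℝ) (u : ℝ × (Fin d → ℝ) → Fin d → ℝ)
    (z : ℝ × (Fin d → ℝ)) : Prop :=
  ∀ i, tder (fun y => ρ y * u y i) z
      + mdiv (fun y i j => ρ y * u y i * u y j) z i
      + xder i (fun y => a * ρ y ^ γ) z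
      - 2 * μ * mdiv (fun y i j => ρ y * xD u y i j) z i = 0

/-- Compressible Euler momentum equation `∂ₜ(ρu) + div(ρ u ⊗ u) + ∇(a ρ^γ) = 0`
at the point `z`. -/
def EulerMomEq (a γ : ℝ) (ρ : ℝ × (Fin d → ℝ) → ℝ) (u : ℝ × (Fin d → ℝ) → Fin d → ℝ)
    (z : ℝ × (Fin d → ℝ)) : Prop :=
  ∀ i, tder (fun y => ρ y * u y i) z
      + mdiv (fun y i j => ρ y * u y i * u y j) z i
      + xder i (fun y => a * ρ y ^ γ) z = 0

/-- The key pointwise identity used to modulate the pressure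
dissipation term in the relative κ-entropy:
`ρ[p′(ρ)∇log ρ − p′(r)∇log r]·[∇log ρ − ∇log r]
  = ρ p′(ρ)|∇log ρ − ∇log r|² + ∇[p(ρ) − p(r) − p′(r)(ρ − r)]·∇log r
    − [ρ(p′(ρ) − p′(r)) − p″(r)(ρ − r) r] |∇log r|²`. -/
theorem pressure_modulation_identity
    {d : ℕ} (hd : 1 ≤ d) (p : ℝ → ℝ) (hp : ContDiffOn ℝ 2 p (Set.Ioi 0))
    (ρ r : (Fin d → ℝ) → ℝ)
    (hρpos : ∀ x, 0 < ρ x) (hrpos : ∀ x, 0 < r x)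
    (hρ : Differentiable ℝ ρ) (hr : Differentiable ℝ r)
    (x : Fin d → ℝ) :
    ρ x * dotv
        (fun i => deriv p (ρ x) * (sder i ρ x / ρ x) - deriv p (r x) * (sder i r x / r x))
        (fun i => sder i ρ x / ρ x - sder i r x / r x)
      = ρ x * deriv p (ρ x) *
          dotv (fun i => sder i ρ x / ρ x - sder i r x / r x)
               (fun i => sder i ρ x / ρ x - sder i r x / r x)
        + dotv
            (fun i => sder i (fun y => p (ρ y) - p (r y) - deriv p (r y) * (ρ y - r y)) x)
            (fun i => sder i r x / r x)
        - (ρ x * (deriv p (ρ x) - deriv p (r x)) - deriv (deriv p) (r x) * (ρ x - r x) * r x) *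
            dotv (fun i => sder i r x / r x) (fun i => sder i r x / r x) := by
  
  have hρ0 : ρ x ≠ 0 := (hρpos x).ne'
  have hr0 : r x ≠ 0 := (hrpos x).ne'
  have hpρ : ContDiffAt ℝ 2 p (ρ x) := hp.contDiffAt (isOpen_Ioi.mem_nhds (hρpos x))
  have hpr : ContDiffAt ℝ 2 p (r x) := hp.contDiffAt (isOpen_Ioi.mem_nhds (hrpos x))
  have hdp : DifferentiableAt ℝ (deriv p) (r x) :=
    ((hp.deriv_of_isOpen (m := 1) isOpen_Ioi le_rfl).differentiableOn one_ne_zero).differentiableAt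
      (isOpen_Ioi.mem_nhds (hrpos x))
  have h1 : HasFDerivAt (fun y => p (ρ y)) (deriv p (ρ x) • fderiv ℝ ρ x) x :=
    (hpρ.differentiableAt two_ne_zero).hasDerivAt.comp_hasFDerivAt x (hρ x).hasFDerivAt
  have h2 : HasFDerivAt (fun y => p (r y)) (deriv p (r x) • fderiv ℝ r x) x :=
    (hpr.differentiableAt two_ne_zero).hasDerivAt.comp_hasFDerivAt x (hr x).hasFDerivAt
  have h3 : HasFDerivAt (fun y => deriv p (r y)) (deriv (deriv p) (r x) • fderiv ℝ r x) x :=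
    hdp.hasDerivAt.comp_hasFDerivAt x (hr x).hasFDerivAt
  have h4 : HasFDerivAt (fun y => ρ y - r y) (fderiv ℝ ρ x - fderiv ℝ r x) x :=
    (hρ x).hasFDerivAt.sub (hr x).hasFDerivAt
  have hg := (h1.sub h2).sub (h3.mul h4)
  have key : ∀ i, sder i (fun y => p (ρ y) - p (r y) - deriv p (r y) * (ρ y - r y)) x
      = deriv p (ρ x) * sder i ρ x - deriv (deriv p) (r x) * (ρ x - r x) * sder i r x
        - deriv p (r x) * sder i ρ x := by
    intro i
    simp only [sder, (show HasFDerivAt (fun y => p (ρ y) - p (r y) - deriv p (r y) * (ρ y - r y)) _ x from hg).fderiv]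
    simp [ContinuousLinearMap.smul_apply, smul_eq_mul]
    ring
  simp only [dotv, key, Finset.mul_sum, ← Finset.sum_sub_distrib, ← Finset.sum_add_distrib]
  refine Finset.sum_congr rfl fun i _ => ?_
  field_simp
  ring
end
end

section
/- Let d ≥ 1, μ > 0, κ ∈ (0,1), and let ρ : ℝ^d → (0,∞) be twice continuously differentiable and u : ℝ^d → ℝ^d continuously differentiable. Define v = u + 2κμ∇log ρ and w = 2√(κ(1−κ)) μ ∇log ρ. Then pointwise: (i) A(v) = A(u); (ii) D(√(1−κ) v) − ∇(√κ w) = √(1−κ) D(u); and consequently (iii) κ|A(v)|² + |D(√(1−κ) v) − ∇(√κ w)|² = κ|A(u)|² + (1−κ)|D(u)|², where |M|² denotes the squared Frobenius norm of the matrix M. -/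
open Real MeasureTheory Set Filter

noncomputable section

variable {d : ℕ}

/-! `v - u` and `w` are multiples of `∇ log ρ`, whose Jacobian is the Hessian of `log ρ` and hence
symmetric. It therefore drops out of the antisymmetric part, and in
`D(√(1-κ) v) - ∇(√κ w)` its two contributions cancel
because `√(1-κ) · 2κμ = √κ · 2√(κ(1-κ)) μ`. Identity (iii) is then (i) and (ii)
together with `(√(1-κ))² = 1 - κ`. -/

def sgrad (f : (Fin d → ℝ) → ℝ) (x : Fin d → ℝ) : Fin d → ℝ :=
  fun i => sder i f x

theorem sder_log {ρ : (Fin d → ℝ) → ℝ} {x : Fin d → ℝ} (hρ : DifferentiableAt ℝ ρ x)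
    (hx : ρ x ≠ 0) (i : Fin d) :
    sder i (fun y => log (ρ y)) x = sder i ρ x / ρ x := by
  rw [sder, (hρ.hasFDerivAt.log hx).fderiv, sder]
  simp [div_eq_inv_mul]

theorem sjac_const_mul (c : ℝ) (u : (Fin d → ℝ) → Fin d → ℝ) (x : Fin d → ℝ) (i j : Fin d) :
    sjac (fun y i => c * u y i) x i j = c * sjac u x i j := by
  simp only [sjac, sder]
  rw [show (fun y => c * u y i) = c • fun y => u y i from rfl, fderiv_const_smul_field]
  rfl

theorem sjac_add {u v : (Fin d → ℝ) → Fin d → ℝ} {x : Fin d → ℝ}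
    (hu : DifferentiableAt ℝ u x) (hv : DifferentiableAt ℝ v x) (i j : Fin d) :
    sjac (fun y i => u y i + v y i) x i j = sjac u x i j + sjac v x i j := by
  simp only [sjac, sder]
  rw [fderiv_fun_add (differentiableAt_pi.1 hu i) (differentiableAt_pi.1 hv i)]
  rfl

theorem sjac_sgrad {f : (Fin d → ℝ) → ℝ} {x : Fin d → ℝ} (hf : ContDiffAt ℝ 2 f x)
    (i j : Fin d) :
    sjac (sgrad f) x i j = fderiv ℝ (fderiv ℝ f) x (Pi.single j 1) (Pi.single i 1) := by
  have hdf : DifferentiableAt ℝ (fderiv ℝ f) x :=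
    (hf.fderiv_right (m := 1) le_rfl).differentiableAt one_ne_zero
  simp only [sjac, sgrad, sder]
  rw [fderiv_clm_apply hdf (differentiableAt_const _)]
  simp

theorem differentiableAt_sgrad {f : (Fin d → ℝ) → ℝ} {x : Fin d → ℝ}
    (hf : ContDiffAt ℝ 2 f x) : DifferentiableAt ℝ (sgrad f) x := by
  have hdf : DifferentiableAt ℝ (fderiv ℝ f) x :=
    (hf.fderiv_right (m := 1) le_rfl).differentiableAt one_ne_zero
  exact differentiableAt_pi.2 fun i => hdf.clm_apply (differentiableAt_const _)

theorem sjac_sgrad_symm {f : (Fin d → ℝ) → ℝ} {x : Fin d → ℝ} (hf : ContDiffAt ℝ 2 f x)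
    (i j : Fin d) : sjac (sgrad f) x i j = sjac (sgrad f) x j i := by
  rw [sjac_sgrad hf, sjac_sgrad hf, hf.isSymmSndFDerivAt (by simp)]

theorem sjac_add_const_mul_sgrad {u : (Fin d → ℝ) → Fin d → ℝ} {f : (Fin d → ℝ) → ℝ}
    {x : Fin d → ℝ} (hu : DifferentiableAt ℝ u x) (hf : ContDiffAt ℝ 2 f x) (c : ℝ)
    (i j : Fin d) :
    sjac (fun y i => u y i + c * sgrad f y i) x i j
      = sjac u x i j + c * sjac (sgrad f) x i j := by
  rw [sjac_add (v := fun y i => c * sgrad f y i) hu ((differentiableAt_sgrad hf).const_smul c),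
    sjac_const_mul]

theorem sA_add_const_mul_sgrad {u : (Fin d → ℝ) → Fin d → ℝ} {f : (Fin d → ℝ) → ℝ}
    {x : Fin d → ℝ} (hu : DifferentiableAt ℝ u x) (hf : ContDiffAt ℝ 2 f x) (c : ℝ) :
    sA (fun y i => u y i + c * sgrad f y i) x = sA u x := by
  funext i j
  simp only [sA, sjac_add_const_mul_sgrad hu hf, sjac_sgrad_symm hf i j]
  ring

theorem sD_add_const_mul_sgrad {u : (Fin d → ℝ) → Fin d → ℝ} {f : (Fin d → ℝ) → ℝ}
    {x : Fin d → ℝ} (hu : DifferentiableAt ℝ u x) (hf : ContDiffAt ℝ 2 f x) (c : ℝ)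
    (i j : Fin d) :
    sD (fun y i => u y i + c * sgrad f y i) x i j = sD u x i j + c * sjac (sgrad f) x i j := by
  simp only [sD, sjac_add_const_mul_sgrad hu hf, sjac_sgrad_symm hf j i]
  ring

theorem sD_const_mul (c : ℝ) (u : (Fin d → ℝ) → Fin d → ℝ) (x : Fin d → ℝ) (i j : Fin d) :
    sD (fun y i => c * u y i) x i j = c * sD u x i j := by
  simp only [sD, sjac_const_mul]
  ring

theorem frob_const_mul (a b : ℝ) (M N : Fin d → Fin d → ℝ) :
    frob (fun i j => a * M i j) (fun i j => b * N i j) = a * b * frob M N := by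
  simp only [frob, Finset.mul_sum]
  exact Finset.sum_congr rfl fun i _ => Finset.sum_congr rfl fun j _ => by ring

theorem sqrt_mul_sqrt_mul_one_sub {κ : ℝ} (hκ : 0 ≤ κ) :
    √κ * √(κ * (1 - κ)) = κ * √(1 - κ) := by
  rw [← Real.sqrt_mul hκ, ← mul_assoc, Real.sqrt_mul (mul_self_nonneg κ),
    Real.sqrt_mul_self hκ]

theorem sD_sub_sjac_augmented {u : (Fin d → ℝ) → Fin d → ℝ} {f : (Fin d → ℝ) → ℝ}
    {x : Fin d → ℝ} (hu : DifferentiableAt ℝ u x) (hf : ContDiffAt ℝ 2 f x) {κ : ℝ}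
    (hκ : 0 ≤ κ) (μ : ℝ) (i j : Fin d) :
    sD (fun y i => √(1 - κ) * (u y i + 2 * κ * μ * sgrad f y i)) x i j
        - sjac (fun y i => √κ * (2 * √(κ * (1 - κ)) * μ * sgrad f y i)) x i j
      = √(1 - κ) * sD u x i j := by
  rw [sD_const_mul, sD_add_const_mul_sgrad hu hf, sjac_const_mul, sjac_const_mul]
  linear_combination (-2 * μ * sjac (sgrad f) x i j) * sqrt_mul_sqrt_mul_one_sub hκ

theorem kappa_entropy_dissipation_identity_general
    {d : ℕ} (μ κ : ℝ) (hκ : κ ∈ Set.Ioo (0 : ℝ) 1)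
    (ρ : (Fin d → ℝ) → ℝ) (u : (Fin d → ℝ) → Fin d → ℝ)
    (hρpos : ∀ x, 0 < ρ x) (hρ : ContDiff ℝ 2 ρ) (hu : ContDiff ℝ 1 u)
    (v w : (Fin d → ℝ) → Fin d → ℝ)
    (hv : v = fun x i => u x i + 2 * κ * μ * (sder i ρ x / ρ x))
    (hw : w = fun x i => 2 * Real.sqrt (κ * (1 - κ)) * μ * (sder i ρ x / ρ x))
    (x : Fin d → ℝ) :
    sA v x = sA u x ∧
    (∀ i j, sD (fun y i => Real.sqrt (1 - κ) * v y i) x i j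
              - sjac (fun y i => Real.sqrt κ * w y i) x i j
            = Real.sqrt (1 - κ) * sD u x i j) ∧
    κ * frob (sA v x) (sA v x)
      + frob (fun i j => sD (fun y i => Real.sqrt (1 - κ) * v y i) x i j
                - sjac (fun y i => Real.sqrt κ * w y i) x i j)
             (fun i j => sD (fun y i => Real.sqrt (1 - κ) * v y i) x i j
                - sjac (fun y i => Real.sqrt κ * w y i) x i j)
      = κ * frob (sA u x) (sA u x) + (1 - κ) * frob (sD u x) (sD u x) := by
  have hlogρ : ContDiff ℝ 2 (fun y => log (ρ y)) := hρ.log fun y => (hρpos y).ne'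
  have hgrad : ∀ y i, sder i ρ y / ρ y = sgrad (fun y => log (ρ y)) y i := fun y i =>
    (sder_log (hρ.differentiable two_ne_zero y) (hρpos y).ne' i).symm
  simp only [hgrad] at hv hw
  subst hv hw
  have hux : DifferentiableAt ℝ u x := hu.differentiable one_ne_zero x
  have hA := sA_add_const_mul_sgrad hux hlogρ.contDiffAt (2 * κ * μ)
  have hD := sD_sub_sjac_augmented hux hlogρ.contDiffAt hκ.1.le μ
  refine ⟨hA, hD, ?_⟩
  rw [hA, funext₂ hD, frob_const_mul, Real.mul_self_sqrt (by linarith [hκ.2])]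

/-- With `v = u + 2κμ∇log ρ` and `w = 2√(κ(1−κ)) μ ∇log ρ`:
(i) `A(v) = A(u)`;
(ii) `D(√(1−κ) v) − ∇(√κ w) = √(1−κ) D(u)`;
(iii) `κ|A(v)|² + |D(√(1−κ) v) − ∇(√κ w)|² = κ|A(u)|² + (1−κ)|D(u)|²`
(squared Frobenius norms). -/
theorem kappa_entropy_dissipation_identity
    {d : ℕ} (hd : 1 ≤ d) (μ κ : ℝ) (hμ : 0 < μ) (hκ : κ ∈ Set.Ioo (0 : ℝ) 1)
    (ρ : (Fin d → ℝ) → ℝ) (u : (Fin d → ℝ) → Fin d → ℝ)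
    (hρpos : ∀ x, 0 < ρ x) (hρ : ContDiff ℝ 2 ρ) (hu : ContDiff ℝ 1 u)
    (v w : (Fin d → ℝ) → Fin d → ℝ)
    (hv : v = fun x i => u x i + 2 * κ * μ * (sder i ρ x / ρ x))
    (hw : w = fun x i => 2 * Real.sqrt (κ * (1 - κ)) * μ * (sder i ρ x / ρ x))
    (x : Fin d → ℝ) :
    sA v x = sA u x ∧
    (∀ i j, sD (fun y i => Real.sqrt (1 - κ) * v y i) x i j
              - sjac (fun y i => Real.sqrt κ * w y i) x i j
            = Real.sqrt (1 - κ) * sD u x i j) ∧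
    κ * frob (sA v x) (sA v x)
      + frob (fun i j => sD (fun y i => Real.sqrt (1 - κ) * v y i) x i j
                - sjac (fun y i => Real.sqrt κ * w y i) x i j)
             (fun i j => sD (fun y i => Real.sqrt (1 - κ) * v y i) x i j
                - sjac (fun y i => Real.sqrt κ * w y i) x i j)
      = κ * frob (sA u x) (sA u x) + (1 - κ) * frob (sD u x) (sD u x) :=
  kappa_entropy_dissipation_identity_general μ κ hκ ρ u hρpos hρ hu v w hv hw x
end
end
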